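/- arXiv:2507.05027 — 3 statements merged into one kernel-verified Lean document; each statement's English description precedes it below -/
import Mathlib

section
/- Let A be a commutative ring, I ⊆ A an ideal, and a ∈ A. Suppose that for every integer r ≥ 0, multiplication by a is injective on the A-module I^r/I^{r+1} (where I^0 = A). Then for every integer r ≥ 1, multiplication by a is injective on A/I^r. -/
/-- Let `A` be a commutative ring, `I` an ideal, `a ∈ A`. If multiplication by `a` is
injective on `Iʳ/Iʳ⁺¹` for every `r ≥ 0` (with `I⁰ = A`), then multiplication by `a`
is injective on `A/Iʳ` for every `r ≥ 1`. -/
theorem injective_smul_quotient_of_injective_on_graded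
    {A : Type*} [CommRing A] (I : Ideal A) (a : A)
    (h : ∀ r : ℕ, Function.Injective
      fun x : (↥(I ^ r)) ⧸ (Submodule.comap (I ^ r).subtype (I ^ (r + 1))) => a • x) :
    ∀ r : ℕ, 1 ≤ r → Function.Injective fun x : A ⧸ I ^ r => a • x := by
  have key : ∀ r : ℕ, ∀ x : A, ∀ hx : x ∈ I ^ r, a * x ∈ I ^ (r + 1) → x ∈ I ^ (r + 1) := by
    intro r x hx hax
    have h0 : a • (Submodule.Quotient.mk (⟨x, hx⟩ : ↥(I ^ r)) :
        (↥(I ^ r)) ⧸ (Submodule.comap (I ^ r).subtype (I ^ (r + 1))))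
        = a • (0 : (↥(I ^ r)) ⧸ (Submodule.comap (I ^ r).subtype (I ^ (r + 1)))) := by
      rw [smul_zero, ← Submodule.Quotient.mk_smul, Submodule.Quotient.mk_eq_zero]
      simpa [Submodule.mem_comap, smul_eq_mul] using hax
    have h1 := h r h0
    rwa [Submodule.Quotient.mk_eq_zero, Submodule.mem_comap] at h1
  have main : ∀ r : ℕ, ∀ z : A, a * z ∈ I ^ r → z ∈ I ^ r := by
    intro r
    induction r with
    | zero => intro z _; simp
    | succ n ih =>
      intro z hz
      have hzn : z ∈ I ^ n := ih z (Ideal.pow_le_pow_right (by omega) hz)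
      exact key n z hzn hz
  intro r _ x y hxy
  obtain ⟨x, rfl⟩ := Submodule.Quotient.mk_surjective _ x
  obtain ⟨y, rfl⟩ := Submodule.Quotient.mk_surjective _ y
  simp only [← Submodule.Quotient.mk_smul] at hxy
  rw [Submodule.Quotient.eq] at hxy ⊢
  have : a * (x - y) ∈ I ^ r := by
    simpa [smul_eq_mul, mul_sub] using hxy
  exact main r _ this
end

section
/- Let K be a field. The K-algebra homomorphism φ : K[u, v] → K[x, y] between polynomial rings in two variables determined by φ(u) = x²·y and φ(v) = y³ + x²·y + x is a finite ring map, i.e. K[x, y] is a finitely generated module over K[u, v] via φ. -/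
/-!
With `u = x²y` and `w = v - u = y³ + x`, both coordinates are integral over `K[u, v]`:
`x` is a root of `T⁷ - wT⁶ + u³` and `y` of `T⁷ - 2wT⁴ + w²T - u`.
A finite-type map whose target is generated by integral elements is finite.
-/

open MvPolynomial

theorem MvPolynomial.finite_toRingHom_of_isIntegralElem_X {R A σ : Type*} [CommRing R]
    [CommRing A] [Algebra R A] [Finite σ] (φ : A →ₐ[R] MvPolynomial σ R)
    (hX : ∀ i, φ.toRingHom.IsIntegralElem (X i)) : φ.toRingHom.Finite := by
  refine RingHom.IsIntegral.to_finite (fun p ↦ ?_) ?_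
  · induction p using MvPolynomial.induction_on with
    | C r => simpa only [AlgHom.toRingHom_eq_coe, RingHom.coe_coe, AlgHom.commutes,
        MvPolynomial.algebraMap_eq] using φ.toRingHom.isIntegralElem_map (x := algebraMap R A r)
    | add p q hp hq => exact RingHom.IsIntegralElem.add _ hp hq
    | mul_X p i hp => exact hp.mul _ (hX i)
  · refine RingHom.FiniteType.of_comp_finiteType (f := algebraMap R A) ?_
    rw [AlgHom.toRingHom_eq_coe, AlgHom.comp_algebraMap]
    exact RingHom.finiteType_algebraMap.mpr inferInstance

theorem RingHom.isIntegralElem_of_map_eq_sq_mul_of_map_eq_pow_three_add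
    {A S : Type*} [CommRing A] [CommRing S] (f : A →+* S) {a b : A} {x y : S}
    (ha : f a = x ^ 2 * y) (hb : f b = y ^ 3 + x) :
    f.IsIntegralElem x ∧ f.IsIntegralElem y := by
  constructor
  · refine ⟨.X ^ 7 - .C b * .X ^ 6 + .C (a ^ 3), by monicity!, ?_⟩
    simp only [Polynomial.eval₂_add, Polynomial.eval₂_sub, Polynomial.eval₂_mul,
      Polynomial.eval₂_pow, Polynomial.eval₂_X, Polynomial.eval₂_C, map_pow, ha, hb]
    ring
  · refine ⟨.X ^ 7 - .C (2 * b) * .X ^ 4 + .C (b ^ 2) * .X - .C a, by monicity!, ?_⟩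
    simp only [Polynomial.eval₂_add, Polynomial.eval₂_sub, Polynomial.eval₂_mul,
      Polynomial.eval₂_pow, Polynomial.eval₂_X, Polynomial.eval₂_C, map_pow, map_mul, map_ofNat,
      Polynomial.eval₂_ofNat, ha, hb]
    ring

/-- The `K`-algebra map `K[u,v] → K[x,y]`, `u ↦ x²y`, `v ↦ y³ + x²y + x`, is a finite
ring map: `K[x,y]` is a finitely generated module over `K[u,v]`. -/
theorem finite_ringHom_aeval (K : Type*) [Field K] :
    RingHom.Finite
      ((MvPolynomial.aeval (R := K)
        ![(X 0 : MvPolynomial (Fin 2) K) ^ 2 * X 1,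
          (X 1 : MvPolynomial (Fin 2) K) ^ 3 + (X 0) ^ 2 * X 1 + X 0]).toRingHom) := by
  set φ := MvPolynomial.aeval (R := K)
    ![(X 0 : MvPolynomial (Fin 2) K) ^ 2 * X 1,
      (X 1 : MvPolynomial (Fin 2) K) ^ 3 + (X 0) ^ 2 * X 1 + X 0]
  have hu : φ.toRingHom (X 0) = X 0 ^ 2 * X 1 := by simp [φ]
  have hw : φ.toRingHom (X 1 - X 0) = X 1 ^ 3 + X 0 := by simp [φ]; ring
  have hint := φ.toRingHom.isIntegralElem_of_map_eq_sq_mul_of_map_eq_pow_three_add hu hw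
  refine finite_toRingHom_of_isIntegralElem_X φ fun i ↦ ?_
  fin_cases i
  exacts [hint.1, hint.2]
end

section
/- Let p and q be rational numbers with p > 1 and q > 1, regarded as elements of the algebraic closure of ℚ. For every nonzero polynomial P in two variables with coefficients in the algebraic closure of ℚ, the set of natural numbers n such that P(p^{2^n}·q^{3^n}, q^{3^n}) = 0 is finite. -/
open MvPolynomial Filter Real Topology

private lemma tendsto_exp_comb (A B : ℝ) (h : B < 0 ∨ (B = 0 ∧ A < 0)) :
    Tendsto (fun n : ℕ => (2:ℝ)^n * A + (3:ℝ)^n * B) atTop atBot := by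
  rcases h with hB | ⟨hB, hA⟩
  · have key : ∀ n : ℕ, (2:ℝ)^n * A + (3:ℝ)^n * B = (3:ℝ)^n * ((2/3:ℝ)^n * A + B) := by
      intro n
      rw [mul_add, ← mul_assoc, ← mul_pow]
      norm_num
    simp only [key]
    exact Tendsto.atTop_mul_neg hB (tendsto_pow_atTop_atTop_of_one_lt (by norm_num))
      (by simpa using
        ((tendsto_pow_atTop_nhds_zero_of_lt_one (by norm_num) (by norm_num)).mul_const A).add_const B)
  · simp only [hB, mul_zero, add_zero]
    exact Tendsto.atTop_mul_const_of_neg hA (tendsto_pow_atTop_atTop_of_one_lt one_lt_two)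

private lemma exists_functional {c : AlgebraicClosure ℚ} (hc : c ≠ 0) :
    ∃ φ : AlgebraicClosure ℚ →ₗ[ℚ] ℚ, φ c = 1 := by
  have hker : LinearMap.ker (LinearMap.toSpanSingleton ℚ (AlgebraicClosure ℚ) c) = ⊥ := by
    rw [LinearMap.ker_eq_bot']
    intro r hr
    rw [LinearMap.toSpanSingleton_apply] at hr
    rcases smul_eq_zero.mp hr with h | h
    · exact h
    · exact absurd h hc
  obtain ⟨g, hg⟩ :=
    (LinearMap.toSpanSingleton ℚ (AlgebraicClosure ℚ) c).exists_leftInverse_of_injective hker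
  refine ⟨g, ?_⟩
  have := LinearMap.congr_fun hg 1
  simpa [LinearMap.toSpanSingleton_apply] using this

private lemma core (p q : ℝ) (hp : 1 < p) (hq : 1 < q)
    (R : MvPolynomial (Fin 2) ℝ) (hR : R ≠ 0) :
    {n : ℕ | eval ![p ^ 2 ^ n * q ^ 3 ^ n, q ^ 3 ^ n] R = 0}.Finite := by
  have hp0 : (0:ℝ) < p := lt_trans one_pos hp
  have hq0 : (0:ℝ) < q := lt_trans one_pos hq
  have hLp : 0 < Real.log p := Real.log_pos hp
  have hLq : 0 < Real.log q := Real.log_pos hq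
  set Lp := Real.log p with hLpdef
  set Lq := Real.log q with hLqdef
  have hpk : ∀ k : ℕ, p ^ k = Real.exp (k * Lp) := fun k => by
    rw [hLpdef, ← Real.log_pow, Real.exp_log (pow_pos hp0 k)]
  have hqk : ∀ k : ℕ, q ^ k = Real.exp (k * Lq) := fun k => by
    rw [hLqdef, ← Real.log_pow, Real.exp_log (pow_pos hq0 k)]
  set E : (Fin 2 →₀ ℕ) → ℕ → ℝ := fun m n =>
    (m 0 : ℝ) * 2 ^ n * Lp + ((m 0 : ℝ) + (m 1 : ℝ)) * 3 ^ n * Lq with hE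
  have heval : ∀ n, eval ![p ^ 2 ^ n * q ^ 3 ^ n, q ^ 3 ^ n] R
      = ∑ m ∈ R.support, coeff m R * Real.exp (E m n) := by
    intro n
    rw [eval_eq']
    refine Finset.sum_congr rfl fun m _ => ?_
    congr 1
    rw [Fin.prod_univ_two]
    simp only [Matrix.cons_val_zero, Matrix.cons_val_one, Matrix.head_cons]
    rw [mul_pow, mul_assoc, ← pow_add, ← pow_mul, ← pow_mul, hpk, hqk, ← Real.exp_add, hE]
    congr 1
    push_cast
    ring
  have hsupp : R.support.Nonempty := support_nonempty.mpr hR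
  set B : ℕ := R.support.sup (fun m => m 0) + 1 with hBdef
  have hBlt : ∀ m ∈ R.support, m 0 < B := fun m hm =>
    Nat.lt_succ_of_le (Finset.le_sup (f := fun m => m 0) hm)
  obtain ⟨M, hM, hMmax⟩ := R.support.exists_max_image
    (fun m => (m 0 + m 1) * B + m 0) hsupp
  have hstep : ∀ x y : ℕ, x < y → x * B + B ≤ y * B := by
    intro x y h
    calc x * B + B = (x + 1) * B := by ring
    _ ≤ y * B := Nat.mul_le_mul_right B h
  have htri : ∀ m ∈ R.support, m ≠ M →
      (m 0 + m 1 < M 0 + M 1) ∨ (m 0 + m 1 = M 0 + M 1 ∧ m 0 < M 0) := by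
    intro m hm hmM
    have h1 : (m 0 + m 1) * B + m 0 ≤ (M 0 + M 1) * B + M 0 := hMmax m hm
    have hmB := hBlt m hm
    have hMB := hBlt M hM
    have hs : m 0 + m 1 ≤ M 0 + M 1 := by
      by_contra hcon
      push_neg at hcon
      have := hstep _ _ hcon
      omega
    rcases lt_or_eq_of_le hs with h | h
    · exact Or.inl h
    · refine Or.inr ⟨h, ?_⟩
      rw [h] at h1
      have ha : m 0 ≤ M 0 := by omega
      rcases lt_or_eq_of_le ha with h' | h'
      · exact h'
      · exfalso
        apply hmM
        have h2 : m 1 = M 1 := by omega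
        apply Finsupp.ext
        intro i
        fin_cases i
        · exact h'
        · exact h2
  set g : ℕ → ℝ := fun n => ∑ m ∈ R.support, coeff m R * Real.exp (E m n - E M n) with hgdef
  have hfactor : ∀ n, eval ![p ^ 2 ^ n * q ^ 3 ^ n, q ^ 3 ^ n] R
      = Real.exp (E M n) * g n := by
    intro n
    rw [heval n, hgdef, Finset.mul_sum]
    refine Finset.sum_congr rfl fun m _ => ?_
    rw [mul_left_comm, ← Real.exp_add]
    congr 2
    ring
  have hg : Tendsto g atTop (𝓝 (coeff M R)) := by
    have h0 : Tendsto g atTop (𝓝 (∑ m ∈ R.support, if m = M then coeff M R else 0)) := by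
      apply tendsto_finset_sum
      intro m hm
      by_cases hmM : m = M
      · subst hmM
        simp only [if_pos rfl, sub_self, Real.exp_zero, mul_one]
        exact tendsto_const_nhds
      · simp only [if_neg hmM]
        have hEd : ∀ n, E m n - E M n
            = (2:ℝ)^n * (((m 0 : ℝ) - (M 0 : ℝ)) * Lp)
              + (3:ℝ)^n * ((((m 0 : ℝ) + (m 1 : ℝ)) - ((M 0 : ℝ) + (M 1 : ℝ))) * Lq) := by
          intro n; rw [hE]; ring
        have hcase : ((((m 0 : ℝ) + (m 1 : ℝ)) - ((M 0 : ℝ) + (M 1 : ℝ))) * Lq) < 0 ∨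
            (((((m 0 : ℝ) + (m 1 : ℝ)) - ((M 0 : ℝ) + (M 1 : ℝ))) * Lq) = 0 ∧
              (((m 0 : ℝ) - (M 0 : ℝ)) * Lp) < 0) := by
          rcases htri m hm hmM with h | ⟨h1, h2⟩
          · left
            apply mul_neg_of_neg_of_pos _ hLq
            have : ((m 0 : ℝ) + (m 1 : ℝ)) < ((M 0 : ℝ) + (M 1 : ℝ)) := by exact_mod_cast h
            linarith
          · right
            constructor
            · have : ((m 0 : ℝ) + (m 1 : ℝ)) = ((M 0 : ℝ) + (M 1 : ℝ)) := by exact_mod_cast h1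
              rw [this]; ring
            · apply mul_neg_of_neg_of_pos _ hLp
              have : (m 0 : ℝ) < (M 0 : ℝ) := by exact_mod_cast h2
              linarith
        have hexp : Tendsto (fun n => Real.exp (E m n - E M n)) atTop (𝓝 0) := by
          have := Real.tendsto_exp_atBot.comp (tendsto_exp_comb _ _ hcase)
          simp only [Function.comp_def] at this
          simpa only [← hEd] using this
        simpa using hexp.const_mul (coeff m R)
    simpa only [Finset.sum_ite_eq' R.support M (fun _ => coeff M R), if_pos hM] using h0
  have hev : ∀ᶠ n in atTop, g n ≠ 0 := hg.eventually_ne (mem_support_iff.mp hM)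
  obtain ⟨N, hN⟩ := eventually_atTop.mp hev
  apply Set.Finite.subset (Set.finite_Iio N)
  intro n hn
  simp only [Set.mem_setOf_eq] at hn
  by_contra hcon
  simp only [Set.mem_Iio, not_lt] at hcon
  apply hN n hcon
  have := hfactor n
  rw [hn] at this
  exact ((mul_eq_zero.mp this.symm).resolve_left (Real.exp_ne_zero _))

/-- For rationals `p, q > 1`, the orbit `(p^(2ⁿ)·q^(3ⁿ), q^(3ⁿ))` in the affine plane
over the algebraic closure of `ℚ` meets the zero locus of any nonzero two-variable
polynomial in only finitely many `n`: the orbit is generic. -/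
theorem orbit_generic (p q : ℚ) (hp : 1 < p) (hq : 1 < q)
    (P : MvPolynomial (Fin 2) (AlgebraicClosure ℚ)) (hP : P ≠ 0) :
    {n : ℕ |
      MvPolynomial.eval
        ![(algebraMap ℚ (AlgebraicClosure ℚ) p) ^ (2 ^ n) *
            (algebraMap ℚ (AlgebraicClosure ℚ) q) ^ (3 ^ n),
          (algebraMap ℚ (AlgebraicClosure ℚ) q) ^ (3 ^ n)] P = 0}.Finite := by
  obtain ⟨M, hM⟩ := support_nonempty.mpr hP
  have hc : coeff M P ≠ 0 := mem_support_iff.mp hM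
  obtain ⟨φ, hφ⟩ := exists_functional hc
  set w : ℕ → Fin 2 → ℚ := fun n => ![p ^ 2 ^ n * q ^ 3 ^ n, q ^ 3 ^ n] with hw
  set Q : MvPolynomial (Fin 2) ℚ := ∑ m ∈ P.support, monomial m (φ (coeff m P)) with hQ
  have hQM : coeff M Q = 1 := by
    rw [hQ, coeff_sum]
    rw [Finset.sum_eq_single M]
    · rw [coeff_monomial, if_pos rfl, hφ]
    · intro m _ hmM; rw [coeff_monomial, if_neg hmM]
    · intro h; exact absurd hM h
  have hQ0 : Q ≠ 0 := fun h => by simp [h] at hQM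
  have hlin : ∀ (x : AlgebraicClosure ℚ) (r : ℚ),
      φ (x * algebraMap ℚ (AlgebraicClosure ℚ) r) = φ x * r := by
    intro x r
    rw [mul_comm, ← Algebra.smul_def, map_smul, smul_eq_mul, mul_comm]
  have hkey : ∀ n : ℕ, MvPolynomial.eval
        ![(algebraMap ℚ (AlgebraicClosure ℚ) p) ^ (2 ^ n) *
            (algebraMap ℚ (AlgebraicClosure ℚ) q) ^ (3 ^ n),
          (algebraMap ℚ (AlgebraicClosure ℚ) q) ^ (3 ^ n)] P = 0 →
      eval (w n) Q = 0 := by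
    intro n h0
    have hv : (![(algebraMap ℚ (AlgebraicClosure ℚ) p) ^ (2 ^ n) *
            (algebraMap ℚ (AlgebraicClosure ℚ) q) ^ (3 ^ n),
          (algebraMap ℚ (AlgebraicClosure ℚ) q) ^ (3 ^ n)] : Fin 2 → AlgebraicClosure ℚ)
        = fun i => algebraMap ℚ (AlgebraicClosure ℚ) (w n i) := by
      funext i
      fin_cases i <;> simp [hw]
    rw [hv, eval_eq'] at h0
    have hφ0 : φ (∑ m ∈ P.support,
        coeff m P * ∏ i, algebraMap ℚ (AlgebraicClosure ℚ) (w n i) ^ (m i)) = 0 := by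
      rw [h0]; exact map_zero φ
    rw [map_sum] at hφ0
    simp only [← map_pow, ← map_prod, hlin] at hφ0
    rw [hQ, map_sum]
    simp only [eval_monomial, Finsupp.prod_pow]
    exact hφ0
  have hpr : (1:ℝ) < (p:ℝ) := by exact_mod_cast hp
  have hqr : (1:ℝ) < (q:ℝ) := by exact_mod_cast hq
  have hmapQ0 : MvPolynomial.map (algebraMap ℚ ℝ) Q ≠ 0 := by
    intro h
    exact hQ0 ((MvPolynomial.map_injective (algebraMap ℚ ℝ) (algebraMap ℚ ℝ).injective)
      (by rw [h, map_zero]))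
  apply Set.Finite.subset (core (p:ℝ) (q:ℝ) hpr hqr (MvPolynomial.map (algebraMap ℚ ℝ) Q) hmapQ0)
  intro n hn
  simp only [Set.mem_setOf_eq] at hn ⊢
  have h1 : eval (w n) Q = 0 := hkey n hn
  have h3 := eval₂_comp_left (algebraMap ℚ ℝ) (RingHom.id ℚ) (w n) Q
  rw [eval₂_id, h1, map_zero, RingHom.comp_id, eval₂_eq_eval_map] at h3
  have hv2 : (![(p:ℝ) ^ 2 ^ n * (q:ℝ) ^ 3 ^ n, (q:ℝ) ^ 3 ^ n] : Fin 2 → ℝ)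
      = (algebraMap ℚ ℝ) ∘ (w n) := by
    funext i
    fin_cases i <;> simp [hw, eq_ratCast]
  rw [hv2, ← h3]
end
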